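/- Let ψ : X × X → ℝ be a negative definite kernel on a nonempty set X with ψ(x,y) ≥ 0 for all x, y ∈ X. Then for every α with 0 < α < 1, the pointwise power (x,y) ↦ ψ(x,y)^α is a negative definite kernel on X, and the function (x,y) ↦ log(1 + ψ(x,y)) is also a negative definite kernel on X. -/

import Mathlib

/-- A symmetric function `ψ : X × X → ℝ` is a negative definite kernel on `X` if
`∑ᵢⱼ cᵢ cⱼ ψ(xᵢ,xⱼ) ≤ 0` for all finite families of points and real coefficients
summing to zero. -/
def IsNegDefKernel {X : Type*} (ψ : X → X → ℝ) : Prop :=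
  (∀ x y, ψ x y = ψ y x) ∧
  ∀ (n : ℕ) (x : Fin n → X) (c : Fin n → ℝ), (∑ i, c i) = 0 →
    ∑ i, ∑ j, c i * c j * ψ (x i) (x j) ≤ 0

/-!
By Schoenberg's theorem `exp (-t ψ)` is positive definite for `t ≥ 0`: up to the factors
`f x f y` with `f x = exp (-ψ x x₀)`, it is the exponential of the positive definite kernel
`ψ x x₀ + ψ x₀ y - ψ x y - ψ x₀ x₀`, and exponentials of positive definite kernels are positive
definite by the Schur product theorem. Hence `1 - exp (-t ψ)` is negative definite, and so is every
positive mixture of these kernels. For `0 < α < 1` the formula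
`s ^ α = C_α⁻¹ ∫₀^∞ t ^ (-1 - α) (1 - exp (-t s)) dt` exhibits `ψ ^ α` as such a mixture, and
`log (1 + s) = lim_{α → 0+} ((1 + s) ^ α - 1) / α` exhibits `log (1 + ψ)` as a limit of
negative definite kernels built from `(1 + ψ) ^ α`.
-/
open Filter Topology MeasureTheory Set
open scoped Matrix

def IsPosDefKernel {X : Type*} (K : X → X → ℝ) : Prop :=
  (∀ x y, K x y = K y x) ∧
  ∀ (n : ℕ) (x : Fin n → X) (c : Fin n → ℝ), 0 ≤ ∑ i, ∑ j, c i * c j * K (x i) (x j)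

theorem Matrix.star_dotProduct_mulVec_eq_sum_sum {n : ℕ} (M : Matrix (Fin n) (Fin n) ℝ)
    (c : Fin n → ℝ) : star c ⬝ᵥ (M *ᵥ c) = ∑ i, ∑ j, c i * c j * M i j := by
  simp only [dotProduct, Matrix.mulVec, star_trivial, Finset.mul_sum]
  exact Finset.sum_congr rfl fun i _ => Finset.sum_congr rfl fun j _ => by ring

theorem sum_sum_mul_mul_add_eq_zero {n : ℕ} {c : Fin n → ℝ} (hc : ∑ i, c i = 0)
    (a b : Fin n → ℝ) : ∑ i, ∑ j, c i * c j * (a i + b j) = 0 := by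
  simp [mul_add, mul_assoc, Finset.sum_add_distrib, ← Finset.sum_mul, ← Finset.mul_sum, hc]

theorem sum_sum_mul_mul_const_eq_zero {n : ℕ} {c : Fin n → ℝ} (hc : ∑ i, c i = 0) (a : ℝ) :
    ∑ i, ∑ j, c i * c j * a = 0 := by
  simpa using sum_sum_mul_mul_add_eq_zero hc (fun _ => a) 0

namespace IsPosDefKernel

variable {X : Type*} {K L : X → X → ℝ}

theorem posSemidef (hK : IsPosDefKernel K) {n : ℕ} (x : Fin n → X) :
    (Matrix.of fun i j => K (x i) (x j)).PosSemidef := by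
  refine Matrix.posSemidef_iff_dotProduct_mulVec.2 ⟨?_, fun c => ?_⟩
  · ext i j
    simp [hK.1 (x i) (x j)]
  · rw [Matrix.star_dotProduct_mulVec_eq_sum_sum]
    exact hK.2 n x c

theorem const {a : ℝ} (ha : 0 ≤ a) : IsPosDefKernel fun _ _ : X => a := by
  refine ⟨fun _ _ => rfl, fun n x c => ?_⟩
  have : 0 ≤ (∑ i, c i) * (∑ i, c i) * a := mul_nonneg (mul_self_nonneg _) ha
  rw [Finset.sum_mul_sum] at this
  simpa only [Finset.sum_mul] using this

theorem const_mul (hK : IsPosDefKernel K) {r : ℝ} (hr : 0 ≤ r) :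
    IsPosDefKernel fun x y => r * K x y := by
  refine ⟨fun x y => by simp only [hK.1 x y], fun n x c => ?_⟩
  have := mul_nonneg hr (hK.2 n x c)
  simpa [Finset.mul_sum, mul_left_comm r] using this

theorem sum {ι : Type*} {K : ι → X → X → ℝ} (s : Finset ι) (hK : ∀ k ∈ s, IsPosDefKernel (K k)) :
    IsPosDefKernel fun x y => ∑ k ∈ s, K k x y := by
  refine ⟨fun x y => Finset.sum_congr rfl fun k hk => (hK k hk).1 x y, fun n x c => ?_⟩
  calc 0 ≤ ∑ k ∈ s, ∑ i, ∑ j, c i * c j * K k (x i) (x j) :=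
        Finset.sum_nonneg fun k hk => (hK k hk).2 n x c
    _ = _ := by
      simp only [Finset.mul_sum]
      rw [Finset.sum_comm]
      exact Finset.sum_congr rfl fun i _ => Finset.sum_comm

theorem mul (hK : IsPosDefKernel K) (hL : IsPosDefKernel L) :
    IsPosDefKernel fun x y => K x y * L x y := by
  refine ⟨fun x y => by simp only [hK.1 x y, hL.1 x y], fun n x c => ?_⟩
  have := ((hK.posSemidef x).hadamard (hL.posSemidef x)).dotProduct_mulVec_nonneg c
  rwa [Matrix.star_dotProduct_mulVec_eq_sum_sum] at this

theorem pow (hK : IsPosDefKernel K) (k : ℕ) : IsPosDefKernel fun x y => K x y ^ k := by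
  induction k with
  | zero => simpa using const (X := X) zero_le_one
  | succ k ih => simpa [pow_succ] using ih.mul hK

theorem of_tendsto {ι : Type*} {l : Filter ι} [l.NeBot] {K : ι → X → X → ℝ} {L : X → X → ℝ}
    (hK : ∀ᶠ i in l, IsPosDefKernel (K i)) (hL : ∀ x y, Tendsto (fun i => K i x y) l (𝓝 (L x y))) :
    IsPosDefKernel L := by
  refine ⟨fun x y => tendsto_nhds_unique (hL x y) ?_, fun n x c => ?_⟩
  · exact (hL y x).congr' (hK.mono fun i hi => hi.1 y x)
  · refine ge_of_tendsto ?_ (hK.mono fun i hi => hi.2 n x c)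
    exact tendsto_finsetSum _ fun i _ => tendsto_finsetSum _ fun j _ =>
      (hL (x i) (x j)).const_mul _

theorem exp (hK : IsPosDefKernel K) : IsPosDefKernel fun x y => Real.exp (K x y) := by
  refine of_tendsto (l := atTop) (K := fun N x y => ∑ k ∈ Finset.range N, K x y ^ k / k.factorial)
    (Eventually.of_forall fun N => sum _ fun k _ => ?_) fun x y => ?_
  · simpa [div_eq_inv_mul] using (hK.pow k).const_mul (inv_nonneg.2 (Nat.cast_nonneg k.factorial))
  · rw [Real.exp_eq_exp_ℝ]
    exact (NormedSpace.expSeries_div_hasSum_exp (K x y)).tendsto_sum_nat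

theorem mul_apply_mul (hK : IsPosDefKernel K) (f : X → ℝ) :
    IsPosDefKernel fun x y => f x * f y * K x y := by
  refine ⟨fun x y => by simp only [hK.1 x y, mul_comm (f x)], fun n x c => ?_⟩
  refine (hK.2 n x fun i => c i * f (x i)).trans_eq ?_
  exact Finset.sum_congr rfl fun i _ => Finset.sum_congr rfl fun j _ => by ring

end IsPosDefKernel

theorem IsPosDefKernel.isNegDefKernel_const_sub {X : Type*} {K : X → X → ℝ} (hK : IsPosDefKernel K)
    (a : ℝ) : IsNegDefKernel fun x y => a - K x y := by
  refine ⟨fun x y => by simp only [hK.1 x y], fun n x c hc => ?_⟩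
  simp only [mul_sub, Finset.sum_sub_distrib, sum_sum_mul_mul_const_eq_zero hc, zero_sub,
    neg_nonpos]
  exact hK.2 n x c

namespace IsNegDefKernel

variable {X : Type*} {ψ : X → X → ℝ}

theorem const_add (hψ : IsNegDefKernel ψ) (a : ℝ) : IsNegDefKernel fun x y => a + ψ x y := by
  refine ⟨fun x y => by simp only [hψ.1 x y], fun n x c hc => ?_⟩
  simpa only [mul_add, Finset.sum_add_distrib, sum_sum_mul_mul_const_eq_zero hc, zero_add]
    using hψ.2 n x c hc

theorem const_mul (hψ : IsNegDefKernel ψ) {r : ℝ} (hr : 0 ≤ r) :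
    IsNegDefKernel fun x y => r * ψ x y := by
  refine ⟨fun x y => by simp only [hψ.1 x y], fun n x c hc => ?_⟩
  have := mul_nonpos_of_nonneg_of_nonpos hr (hψ.2 n x c hc)
  simpa [Finset.mul_sum, mul_left_comm r] using this

theorem of_tendsto {ι : Type*} {l : Filter ι} [l.NeBot] {K : ι → X → X → ℝ}
    (hK : ∀ᶠ i in l, IsNegDefKernel (K i)) (hψ : ∀ x y, Tendsto (fun i => K i x y) l (𝓝 (ψ x y))) :
    IsNegDefKernel ψ := by
  refine ⟨fun x y => tendsto_nhds_unique (hψ x y) ?_, fun n x c hc => ?_⟩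
  · exact (hψ y x).congr' (hK.mono fun i hi => hi.1 y x)
  · refine le_of_tendsto ?_ (hK.mono fun i hi => hi.2 n x c hc)
    exact tendsto_finsetSum _ fun i _ => tendsto_finsetSum _ fun j _ =>
      (hψ (x i) (x j)).const_mul _

theorem integral {ι : Type*} [MeasurableSpace ι] {μ : Measure ι} {K : ι → X → X → ℝ}
    (hK : ∀ᵐ t ∂μ, IsNegDefKernel (K t)) (hint : ∀ x y, Integrable (fun t => K t x y) μ) :
    IsNegDefKernel fun x y => ∫ t, K t x y ∂μ := by
  refine ⟨fun x y => integral_congr_ae (hK.mono fun t ht => ht.1 x y), fun n x c hc => ?_⟩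
  have hsum : ∑ i, ∑ j, c i * c j * ∫ t, K t (x i) (x j) ∂μ
      = ∫ t, ∑ i, ∑ j, c i * c j * K t (x i) (x j) ∂μ := by
    simp only [← integral_const_mul]
    rw [integral_finsetSum _ fun i _ => integrable_finsetSum _ fun j _ => (hint _ _).const_mul _]
    exact Finset.sum_congr rfl fun i _ =>
      (integral_finsetSum _ fun j _ => (hint _ _).const_mul _).symm
  rw [hsum]
  exact integral_nonpos_of_ae (hK.mono fun t ht => ht.2 n x c hc)

theorem isPosDefKernel_basepoint (hψ : IsNegDefKernel ψ) (x₀ : X) :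
    IsPosDefKernel fun x y => ψ x x₀ + ψ x₀ y - ψ x y - ψ x₀ x₀ := by
  refine ⟨fun x y => by simp only [hψ.1 x y, hψ.1 x x₀, hψ.1 x₀ y]; ring, fun n x c => ?_⟩
  have hform : ∀ (m : ℕ) (y : Fin m → X) (d : Fin m → ℝ), ∑ i, d i = 0 →
      0 ≤ ∑ i, ∑ j, d i * d j * (ψ (y i) x₀ + ψ x₀ (y j) - ψ (y i) (y j) - ψ x₀ x₀) := by
    intro m y d hd
    have hsplit := sum_sum_mul_mul_add_eq_zero hd (fun i => ψ (y i) x₀ - ψ x₀ x₀)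
      (fun j => ψ x₀ (y j))
    calc 0 ≤ ∑ i, ∑ j, d i * d j * ((ψ (y i) x₀ - ψ x₀ x₀) + ψ x₀ (y j))
          - ∑ i, ∑ j, d i * d j * ψ (y i) (y j) := by linarith [hψ.2 m y d hd]
      _ = _ := by
        rw [← Finset.sum_sub_distrib]
        refine Finset.sum_congr rfl fun i _ => ?_
        rw [← Finset.sum_sub_distrib]
        exact Finset.sum_congr rfl fun j _ => by ring
  -- Adjoin `x₀` with weight `-∑ c`: the kernel vanishes as soon as one argument is `x₀`.
  have := hform (n + 1) (Fin.cons x₀ x) (Fin.cons (-∑ i, c i) c) (by simp [Fin.sum_univ_succ])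
  simpa [Fin.sum_univ_succ] using this

end IsNegDefKernel

open Real in
theorem IsNegDefKernel.isPosDefKernel_exp_neg {X : Type*} [Nonempty X] {ψ : X → X → ℝ}
    (hψ : IsNegDefKernel ψ) : IsPosDefKernel fun x y => exp (-ψ x y) := by
  obtain ⟨x₀⟩ := ‹Nonempty X›
  convert (((hψ.isPosDefKernel_basepoint x₀).exp.mul_apply_mul fun x => exp (-ψ x x₀)).const_mul
    (exp_pos (ψ x₀ x₀)).le) using 3 with x y
  rw [hψ.1 x₀ y, ← exp_add, ← exp_add, ← exp_add]
  ring_nf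

section RpowIntegral

open Real

variable {α : ℝ}

theorem continuousOn_rpow_mul_one_sub_exp_neg (s : ℝ) :
    ContinuousOn (fun t => t ^ (-1 - α) * (1 - exp (-(t * s)))) (Ioi 0) := by
  refine ContinuousOn.mul ?_ (by fun_prop)
  exact continuousOn_id.rpow_const fun t ht => Or.inl (ne_of_gt ht)

theorem integrableOn_rpow_mul_one_sub_exp_neg (hα₀ : 0 < α) (hα₁ : α < 1) {s : ℝ} (hs : 0 ≤ s) :
    IntegrableOn (fun t => t ^ (-1 - α) * (1 - exp (-(t * s)))) (Ioi 0) := by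
  have hcont := continuousOn_rpow_mul_one_sub_exp_neg (α := α) s
  have hnonneg : ∀ t ∈ Ioi (0 : ℝ), 0 ≤ 1 - exp (-(t * s)) := fun t ht => by
    have : exp (-(t * s)) ≤ 1 := exp_le_one_iff.2 (by nlinarith [mem_Ioi.1 ht])
    linarith
  rw [← Ioc_union_Ioi_eq_Ioi zero_le_one]
  refine IntegrableOn.union ?_ ?_
  · have hdom : IntegrableOn (fun t => s * t ^ (-α)) (Ioc 0 1) :=
      Integrable.const_mul ((intervalIntegrable_iff_integrableOn_Ioc_of_le zero_le_one).1
        (intervalIntegral.intervalIntegrable_rpow' (by linarith))) s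
    refine hdom.mono' ((hcont.mono Ioc_subset_Ioi_self).aestronglyMeasurable measurableSet_Ioc) ?_
    filter_upwards [ae_restrict_mem measurableSet_Ioc] with t ht
    have ht₀ : 0 < t := ht.1
    rw [Real.norm_of_nonneg (mul_nonneg (rpow_nonneg ht₀.le _) (hnonneg t ht₀))]
    calc t ^ (-1 - α) * (1 - exp (-(t * s))) ≤ t ^ (-1 - α) * (t * s) := by
          gcongr; linarith [add_one_le_exp (-(t * s))]
      _ = s * t ^ (-α) := by
          rw [show -α = (-1 - α) + 1 by ring, rpow_add_one ht₀.ne']; ring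
  · have hdom : IntegrableOn (fun t : ℝ => t ^ (-1 - α)) (Ioi 1) :=
      integrableOn_Ioi_rpow_of_lt (by linarith) one_pos
    refine hdom.mono' ((hcont.mono (Ioi_subset_Ioi zero_le_one)).aestronglyMeasurable
      measurableSet_Ioi) ?_
    filter_upwards [ae_restrict_mem measurableSet_Ioi] with t ht
    have ht₀ : 0 < t := zero_lt_one.trans ht
    rw [Real.norm_of_nonneg (mul_nonneg (rpow_nonneg ht₀.le _) (hnonneg t ht₀))]
    exact mul_le_of_le_one_right (rpow_nonneg ht₀.le _) (by linarith [exp_pos (-(t * s))])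

theorem integral_rpow_mul_one_sub_exp_neg_mul {s : ℝ} (hs : 0 < s) :
    ∫ t in Ioi 0, t ^ (-1 - α) * (1 - exp (-(t * s)))
      = s ^ α * ∫ t in Ioi 0, t ^ (-1 - α) * (1 - exp (-t)) := by
  have hscale : ∀ t ∈ Ioi (0 : ℝ), t ^ (-1 - α) * (1 - exp (-(t * s)))
      = s ^ (1 + α) * ((t * s) ^ (-1 - α) * (1 - exp (-(t * s)))) := fun t ht => by
    rw [mul_rpow (le_of_lt ht) hs.le, ← mul_assoc, mul_comm (s ^ (1 + α)), mul_assoc (t ^ _),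
      ← rpow_add hs]
    norm_num
  rw [setIntegral_congr_fun measurableSet_Ioi hscale, integral_const_mul,
    integral_comp_mul_right_Ioi (fun u => u ^ (-1 - α) * (1 - exp (-u))) 0 hs, zero_mul,
    smul_eq_mul, ← mul_assoc, ← rpow_neg_one s, ← rpow_add hs]
  ring_nf

theorem integral_rpow_mul_one_sub_exp_neg_pos (hα₀ : 0 < α) (hα₁ : α < 1) :
    0 < ∫ t in Ioi 0, t ^ (-1 - α) * (1 - exp (-t)) := by
  have hint := integrableOn_rpow_mul_one_sub_exp_neg hα₀ hα₁ zero_le_one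
  simp only [mul_one] at hint
  have hpos : ∀ t ∈ Ioi (0 : ℝ), 0 < t ^ (-1 - α) * (1 - exp (-t)) := fun t ht =>
    mul_pos (rpow_pos_of_pos ht _) (by linarith [exp_lt_one_iff.2 (neg_lt_zero.2 ht)])
  rw [setIntegral_pos_iff_support_of_nonneg_ae
    ((ae_restrict_mem measurableSet_Ioi).mono fun t ht => (hpos t ht).le) hint,
    inter_eq_self_of_subset_right (show Ioi (0 : ℝ) ⊆ Function.support _ from
      fun t ht => (hpos t ht).ne')]
  simp

theorem rpow_eq_inv_integral_mul_integral (hα₀ : 0 < α) (hα₁ : α < 1) {s : ℝ} (hs : 0 ≤ s) :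
    s ^ α = (∫ t in Ioi 0, t ^ (-1 - α) * (1 - exp (-t)))⁻¹
      * ∫ t in Ioi 0, t ^ (-1 - α) * (1 - exp (-(t * s))) := by
  rcases hs.eq_or_lt with rfl | hs
  · simp [zero_rpow hα₀.ne']
  · rw [integral_rpow_mul_one_sub_exp_neg_mul hs, mul_left_comm,
      inv_mul_cancel₀ (integral_rpow_mul_one_sub_exp_neg_pos hα₀ hα₁).ne', mul_one]

end RpowIntegral

namespace IsNegDefKernel

open Real

variable {X : Type*} [Nonempty X] {ψ : X → X → ℝ}

theorem rpow (hψ : IsNegDefKernel ψ) (hnonneg : ∀ x y, 0 ≤ ψ x y) {α : ℝ} (hα₀ : 0 < α)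
    (hα₁ : α < 1) : IsNegDefKernel fun x y => ψ x y ^ α := by
  have hint : IsNegDefKernel fun x y => ∫ t in Ioi 0, t ^ (-1 - α) * (1 - exp (-(t * ψ x y))) :=
    integral (K := fun t x y => t ^ (-1 - α) * (1 - exp (-(t * ψ x y))))
      (ae_restrict_of_forall_mem measurableSet_Ioi fun t ht =>
        ((hψ.const_mul (le_of_lt ht)).isPosDefKernel_exp_neg.isNegDefKernel_const_sub 1).const_mul
          (rpow_nonneg (le_of_lt ht) _))
      fun x y => integrableOn_rpow_mul_one_sub_exp_neg hα₀ hα₁ (hnonneg x y)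
  convert hint.const_mul (inv_nonneg.2 (integral_rpow_mul_one_sub_exp_neg_pos hα₀ hα₁).le)
    using 3 with x y
  exact rpow_eq_inv_integral_mul_integral hα₀ hα₁ (hnonneg x y)

theorem log_one_add (hψ : IsNegDefKernel ψ) (hnonneg : ∀ x y, 0 ≤ ψ x y) :
    IsNegDefKernel fun x y => log (1 + ψ x y) := by
  have hpos : ∀ x y, 0 < 1 + ψ x y := fun x y => by linarith [hnonneg x y]
  refine of_tendsto (l := 𝓝[>] (0 : ℝ)) (K := fun α x y => slope (fun a => (1 + ψ x y) ^ a) 0 α)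
    ?_ fun x y => ?_
  · filter_upwards [Ioo_mem_nhdsGT one_pos] with α hα
    convert (((hψ.const_add 1).rpow (fun x y => (hpos x y).le) hα.1 hα.2).const_add (-1)).const_mul
      (inv_nonneg.2 hα.1.le) using 3 with x y
    simp only [slope, rpow_zero, sub_zero, smul_eq_mul, vsub_eq_sub]
    ring
  · have hderiv := (hasStrictDerivAt_const_rpow (hpos x y) 0).hasDerivAt
    rw [hasDerivAt_iff_tendsto_slope, rpow_zero, one_mul] at hderiv
    exact hderiv.mono_left (nhdsWithin_mono 0 fun a ha => ne_of_gt ha)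

end IsNegDefKernel

theorem negdef_rpow_and_log_one_add
    {X : Type*} [Nonempty X] (ψ : X → X → ℝ) (hψ : IsNegDefKernel ψ)
    (hnonneg : ∀ x y, 0 ≤ ψ x y) :
    (∀ α : ℝ, 0 < α → α < 1 → IsNegDefKernel (fun x y => (ψ x y) ^ α)) ∧
    IsNegDefKernel (fun x y => Real.log (1 + ψ x y)) :=
  ⟨fun _ => hψ.rpow hnonneg, hψ.log_one_add hnonneg⟩
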